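/- arXiv:1909.02393 — 7 statements merged into one kernel-verified Lean document; each statement's English description precedes it below -/
import Mathlib

section
/- Adding fitting behavior to the log cannot lower trace-based recall (proposition RecPro2 for rec_TB): for any nonempty event logs l1, l3 with l2 = l1 ⊎ l3 (multiset sum) and any process model m such that τ(l3) ⊆ τ(m), one has rec_TB(l1, m) ≤ rec_TB(l2, m). -/
open scoped Classical

/-- Trace-based recall: `|τ(l) ∩ τ(m)| / |τ(l)|`. -/
noncomputable def recTB {A : Type*} (l : Multiset (List A)) (m : Set (List A)) : ℝ :=
  ((l.toFinset.filter (fun t => t ∈ m)).card : ℝ) / ((l.toFinset.card : ℝ))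

/-- RecPro2 for rec_TB: adding fitting behavior to the log cannot lower recall. -/
theorem recTB_add_fitting {A : Type*} (l1 l2 l3 : Multiset (List A))
    (hl1 : l1 ≠ 0) (hl3 : l3 ≠ 0) (hsum : l2 = l1 + l3)
    (m : Set (List A)) (hfit : ∀ t ∈ l3, t ∈ m) :
    recTB l1 m ≤ recTB l2 m := by
  subst hsum
  set s1 := l1.toFinset with hs1
  set s2 := (l1 + l3).toFinset with hs2
  have hsub : s1 ⊆ s2 := by
    intro x hx
    simp only [hs1, hs2, Multiset.mem_toFinset, Multiset.mem_add] at *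
    exact Or.inl hx
  have hne : s1.Nonempty := by
    obtain ⟨x, hx⟩ := Multiset.exists_mem_of_ne_zero hl1
    exact ⟨x, Multiset.mem_toFinset.mpr hx⟩
  set f1 := s1.filter (fun t => t ∈ m) with hf1
  set f2 := s2.filter (fun t => t ∈ m) with hf2
  have hdiff : (s2 \ s1) ⊆ f2 := by
    intro x hx
    rw [Finset.mem_sdiff] at hx
    obtain ⟨hx2, hx1⟩ := hx
    refine Finset.mem_filter.mpr ⟨hx2, ?_⟩
    have : x ∈ l1 + l3 := Multiset.mem_toFinset.mp hx2
    rcases Multiset.mem_add.mp this with h | h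
    · exact absurd (Multiset.mem_toFinset.mpr h) hx1
    · exact hfit x h
  have hf1sub : f1 ⊆ f2 := Finset.filter_subset_filter _ hsub
  have hcard : f1.card + (s2.card - s1.card) ≤ f2.card := by
    have hdisj : Disjoint f1 (s2 \ s1) := by
      apply Finset.disjoint_left.mpr
      intro x hx hx2
      exact (Finset.mem_sdiff.mp hx2).2 (Finset.filter_subset _ _ hx)
    have : f1 ∪ (s2 \ s1) ⊆ f2 := Finset.union_subset hf1sub hdiff
    calc f1.card + (s2.card - s1.card) = f1.card + (s2 \ s1).card := by
          rw [Finset.card_sdiff_of_subset hsub]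
      _ = (f1 ∪ (s2 \ s1)).card := (Finset.card_union_of_disjoint hdisj).symm
      _ ≤ f2.card := Finset.card_le_card this
  have h1 : (0:ℝ) < s1.card := by exact_mod_cast Finset.card_pos.mpr hne
  have h2 : (0:ℝ) < s2.card := lt_of_lt_of_le h1 (by exact_mod_cast Finset.card_le_card hsub)
  have hle : s1.card ≤ s2.card := Finset.card_le_card hsub
  have hf1le : f1.card ≤ s1.card := Finset.card_filter_le _ _
  have hN : f1.card + s2.card ≤ f2.card + s1.card := by omega
  have hNR : (f1.card:ℝ) + s2.card ≤ (f2.card:ℝ) + s1.card := by exact_mod_cast hN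
  unfold recTB
  rw [div_le_div_iff₀ h1 h2]
  show (f1.card:ℝ) * s2.card ≤ (f2.card:ℝ) * s1.card
  have hf1leR : (f1.card : ℝ) ≤ s1.card := by exact_mod_cast hf1le
  have hs12 : (s1.card:ℝ) ≤ s2.card := by exact_mod_cast hle
  nlinarith [hNR, hf1leR, h1, h2, mul_nonneg (sub_nonneg.mpr hs12) (sub_nonneg.mpr hf1leR)]
end

section
/- Adding non-fitting behavior to the log cannot raise trace-based recall (proposition RecPro3 for rec_TB): for any nonempty event logs l1, l3 with l2 = l1 ⊎ l3 (multiset sum) and any process model m such that every trace of l3 lies outside τ(m) (i.e., τ(l3) ∩ τ(m) = ∅), one has rec_TB(l1, m) ≥ rec_TB(l2, m). -/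
open scoped Classical

/-- RecPro3 for rec_TB: adding non-fitting behavior to the log cannot raise recall. -/
theorem recTB_add_nonfitting {A : Type*} (l1 l2 l3 : Multiset (List A))
    (hl1 : l1 ≠ 0) (hl3 : l3 ≠ 0) (hsum : l2 = l1 + l3)
    (m : Set (List A)) (hnonfit : ∀ t ∈ l3, t ∉ m) :
    recTB l2 m ≤ recTB l1 m := by
  subst hsum
  have htf : (l1 + l3).toFinset = l1.toFinset ∪ l3.toFinset := Multiset.toFinset_add l1 l3
  have hfilt : ((l1 + l3).toFinset.filter (fun t => t ∈ m)) =
      l1.toFinset.filter (fun t => t ∈ m) := by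
    rw [htf, Finset.filter_union]
    have : l3.toFinset.filter (fun t => t ∈ m) = ∅ := by
      apply Finset.filter_false_of_mem
      intro t ht
      exact hnonfit t (Multiset.mem_toFinset.mp ht)
    rw [this, Finset.union_empty]
  have hcard1 : 0 < l1.toFinset.card := by
    rw [Finset.card_pos]
    obtain ⟨t, ht⟩ := Multiset.exists_mem_of_ne_zero hl1
    exact ⟨t, Multiset.mem_toFinset.mpr ht⟩
  have hcardle : l1.toFinset.card ≤ (l1 + l3).toFinset.card := by
    apply Finset.card_le_card
    rw [htf]; exact Finset.subset_union_left
  unfold recTB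
  rw [hfilt]
  apply div_le_div_of_nonneg_left
  · positivity
  · exact_mod_cast hcard1
  · exact_mod_cast hcardle
end

section
/- Adding fitting behavior to the log cannot lower frequency-based recall (proposition RecPro2 for rec_FB): for any nonempty event logs l1, l3 with l2 = l1 ⊎ l3 (multiset sum) and any process model m such that τ(l3) ⊆ τ(m), one has rec_FB(l1, m) ≤ rec_FB(l2, m). -/
open scoped Classical

/-- Frequency-based recall: `|[t ∈ l | t ∈ τ(m)]| / |l|` (counted with multiplicity). -/
noncomputable def recFB {A : Type*} (l : Multiset (List A)) (m : Set (List A)) : ℝ :=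
  ((l.filter (fun t => t ∈ m)).card : ℝ) / ((Multiset.card l : ℝ))

/-- RecPro2 for rec_FB: adding fitting behavior to the log cannot lower recall. -/
theorem recFB_add_fitting {A : Type*} (l1 l2 l3 : Multiset (List A))
    (hl1 : l1 ≠ 0) (hl3 : l3 ≠ 0) (hsum : l2 = l1 + l3)
    (m : Set (List A)) (hfit : ∀ t ∈ l3, t ∈ m) :
    recFB l1 m ≤ recFB l2 m := by
  subst hsum
  unfold recFB
  have hf3 : l3.filter (fun t => t ∈ m) = l3 := Multiset.filter_eq_self.2 hfit
  rw [Multiset.filter_add, hf3, Multiset.card_add, Multiset.card_add]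
  set a : ℝ := ((l1.filter (fun t => t ∈ m)).card : ℝ)
  set b : ℝ := (Multiset.card l1 : ℝ)
  set c : ℝ := (Multiset.card l3 : ℝ)
  have hab : a ≤ b := by
    simp only [a, b]
    exact_mod_cast Multiset.card_le_card (Multiset.filter_le _ _)
  have hb : 0 < b := by
    simp only [b]
    exact_mod_cast Multiset.card_pos.2 hl1
  have hc : 0 < c := by
    simp only [c]
    exact_mod_cast Multiset.card_pos.2 hl3
  push_cast
  rw [div_le_div_iff₀ hb (by linarith)]
  nlinarith
end

section
/- Adding non-fitting behavior to the log cannot raise frequency-based recall (proposition RecPro3 for rec_FB): for any nonempty event logs l1, l3 with l2 = l1 ⊎ l3 (multiset sum) and any process model m such that every trace of l3 lies outside τ(m), one has rec_FB(l1, m) ≥ rec_FB(l2, m). -/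
open scoped Classical

/-- RecPro3 for rec_FB: adding non-fitting behavior to the log cannot raise recall. -/
theorem recFB_add_nonfitting {A : Type*} (l1 l2 l3 : Multiset (List A))
    (hl1 : l1 ≠ 0) (hl3 : l3 ≠ 0) (hsum : l2 = l1 + l3)
    (m : Set (List A)) (hnonfit : ∀ t ∈ l3, t ∉ m) :
    recFB l2 m ≤ recFB l1 m := by
  subst hsum
  have h3 : l3.filter (fun t => t ∈ m) = 0 := by
    rw [Multiset.filter_eq_nil]
    exact hnonfit
  have hfilt : (l1 + l3).filter (fun t => t ∈ m) = l1.filter (fun t => t ∈ m) := by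
    rw [Multiset.filter_add, h3, add_zero]
  unfold recFB
  rw [hfilt, Multiset.card_add]
  have h1pos : (0:ℝ) < (Multiset.card l1 : ℝ) := by
    have := Multiset.card_pos.mpr hl1
    exact_mod_cast this
  have h2pos : (0:ℝ) < ((Multiset.card l1 + Multiset.card l3 : ℕ) : ℝ) := by
    have : 0 < Multiset.card l1 + Multiset.card l3 := by
      have := Multiset.card_pos.mpr hl1; omega
    exact_mod_cast this
  apply div_le_div_of_nonneg_left (by positivity) h1pos
  exact_mod_cast Nat.le_add_right _ _
end

section
/- Removing unobserved behavior from the model cannot lower trace-based precision (proposition PrecPro1 for prec_TB): for any nonempty event log l and any two process models with nonempty finite behaviors τ(m1) ⊆ τ(m2) such that τ(l) ∩ (τ(m2) \ τ(m1)) = ∅, one has prec_TB(l, m1) ≥ prec_TB(l, m2). -/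
open scoped Classical

/-- Trace-based precision: `|τ(l) ∩ τ(m)| / |τ(m)|`, for a model with finite behavior `m`. -/
noncomputable def precTB {A : Type*} (l : Multiset (List A)) (m : Finset (List A)) : ℝ :=
  ((l.toFinset ∩ m).card : ℝ) / ((m.card : ℝ))

/-- PrecPro1 for prec_TB: removing unobserved behavior from the model cannot
lower trace-based precision. -/
theorem precTB_remove_unobserved {A : Type*} (l : Multiset (List A)) (hl : l ≠ 0)
    (m1 m2 : Finset (List A)) (hm1 : m1.Nonempty) (hm2 : m2.Nonempty)
    (hsub : m1 ⊆ m2) (hdisj : l.toFinset ∩ (m2 \ m1) = ∅) :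
    precTB l m2 ≤ precTB l m1 := by
  have hinter : l.toFinset ∩ m2 = l.toFinset ∩ m1 := by
    apply Finset.ext
    intro x
    simp only [Finset.mem_inter]
    constructor
    · rintro ⟨hx, hx2⟩
      refine ⟨hx, ?_⟩
      by_contra hx1
      have : x ∈ l.toFinset ∩ (m2 \ m1) := by
        simp [Finset.mem_inter, Finset.mem_sdiff, hx, hx2, hx1]
      rw [hdisj] at this
      simp at this
    · rintro ⟨hx, hx1⟩
      exact ⟨hx, hsub hx1⟩
  unfold precTB
  rw [hinter]
  apply div_le_div_of_nonneg_left
  · positivity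
  · exact_mod_cast hm1.card_pos
  · exact_mod_cast Finset.card_le_card hsub
end

section
/- Adding fitting behavior to the log cannot lower trace-based precision (proposition PrecPro2 for prec_TB): for any nonempty event logs l1, l3 with l2 = l1 ⊎ l3 (multiset sum) and any process model m with nonempty finite behavior τ(m) such that τ(l3) ⊆ τ(m), one has prec_TB(l1, m) ≤ prec_TB(l2, m). -/
open scoped Classical

/-- PrecPro2 for prec_TB: adding fitting behavior to the log cannot lower precision. -/
theorem precTB_add_fitting {A : Type*} (l1 l2 l3 : Multiset (List A))
    (hl1 : l1 ≠ 0) (hl3 : l3 ≠ 0) (hsum : l2 = l1 + l3)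
    (m : Finset (List A)) (hm : m.Nonempty) (hfit : ∀ t ∈ l3, t ∈ m) :
    precTB l1 m ≤ precTB l2 m := by
  unfold precTB
  apply div_le_div_of_nonneg_right ?_ ?_ |>.trans_eq rfl <;> try skip
  · exact_mod_cast Finset.card_le_card (by
      intro x hx
      simp only [Finset.mem_inter, Multiset.mem_toFinset, hsum, Multiset.mem_add] at *
      exact ⟨Or.inl hx.1, hx.2⟩)
  · exact_mod_cast hm.card_pos.le
end

section
/- Adding non-fitting behavior to the log does not change trace-based precision (proposition PrecPro3 for prec_TB): for any nonempty event logs l1, l3 with l2 = l1 ⊎ l3 (multiset sum) and any process model m with nonempty finite behavior τ(m) such that every trace of l3 lies outside τ(m) (i.e., τ(l3) ∩ τ(m) = ∅), one has prec_TB(l1, m) = prec_TB(l2, m). -/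
open scoped Classical

/-- PrecPro3 for prec_TB: adding non-fitting behavior to the log does not
change trace-based precision. -/
theorem precTB_add_nonfitting {A : Type*} (l1 l2 l3 : Multiset (List A))
    (hl1 : l1 ≠ 0) (hl3 : l3 ≠ 0) (hsum : l2 = l1 + l3)
    (m : Finset (List A)) (hm : m.Nonempty) (hnonfit : ∀ t ∈ l3, t ∉ m) :
    precTB l1 m = precTB l2 m := by
  subst hsum
  unfold precTB
  have h : (l1 + l3).toFinset ∩ m = l1.toFinset ∩ m := by
    ext t
    simp only [Finset.mem_inter, Multiset.mem_toFinset, Multiset.mem_add]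
    constructor
    · rintro ⟨h | h, hm'⟩
      · exact ⟨h, hm'⟩
      · exact absurd hm' (hnonfit t h)
    · rintro ⟨h, hm'⟩; exact ⟨Or.inl h, hm'⟩
  rw [h]
end
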